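/- Every graph G with no K_{2,2} subgraph admits a 2-colouring in which every monochromatic component has maximum degree at most 2·col_2(G). -/

import Mathlib

open SimpleGraph Set

/-- The monochromatic subgraph of `G` under colouring `C`. -/
def monoSubgraph {V α : Type*} (G : SimpleGraph V) (C : V → α) : SimpleGraph V where
  Adj a b := G.Adj a b ∧ C a = C b
  symm := ⟨fun _ _ h => ⟨h.1.symm, h.2.symm⟩⟩
  loopless := ⟨fun a h => G.loopless.irrefl a h.1⟩

/-- The colouring `C` of `G` has defect at most `d`: every monochromatic component has
maximum degree at most `d` (equivalently, every vertex has at most `d` neighbours of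
its own colour). -/
def HasDefect {V α : Type*} (G : SimpleGraph V) (C : V → α) (d : ℕ) : Prop :=
  ∀ v, {w | G.Adj v w ∧ C w = C v}.ncard ≤ d

/-- The colouring `C` of `G` has clustering at most `c`: every monochromatic component
has at most `c` vertices. -/
def HasClustering {V α : Type*} (G : SimpleGraph V) (C : V → α) (c : ℕ) : Prop :=
  ∀ v, {w | (monoSubgraph G C).Reachable v w}.ncard ≤ c

/-- Feedback vertex number at most `k`. -/
def FvnLE {V : Type*} (G : SimpleGraph V) (k : ℕ) : Prop :=
  ∃ A : Set V, A.Finite ∧ A.ncard ≤ k ∧ (G.induce Aᶜ).IsAcyclic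

/-- `H` is a minor of `G`, via branch sets. -/
def IsMinorOf {W V : Type*} (H : SimpleGraph W) (G : SimpleGraph V) : Prop :=
  ∃ B : W → Set V,
    (∀ w, (B w).Nonempty) ∧
    (Pairwise fun w w' => Disjoint (B w) (B w')) ∧
    (∀ w, (G.induce (B w)).Connected) ∧
    (∀ w w', H.Adj w w' → ∃ a ∈ B w, ∃ b ∈ B w', G.Adj a b)

/-- Treedepth at most `k`: there is a forest (ancestor) partial order `r` of height
at most `k` such that the endpoints of every edge are comparable. -/
def TreedepthLE {V : Type*} (G : SimpleGraph V) (k : ℕ) : Prop :=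
  ∃ r : V → V → Prop,
    (∀ v, r v v) ∧
    (∀ a b c, r a b → r b c → r a c) ∧
    (∀ a b, r a b → r b a → a = b) ∧
    (∀ v a b, r a v → r b v → r a b ∨ r b a) ∧
    (∀ v, {u | r u v}.Finite ∧ {u | r u v}.ncard ≤ k) ∧
    (∀ a b, G.Adj a b → r a b ∨ r b a)

/-- Pathwidth at most `k`, via path decompositions. -/
def PathwidthLE {V : Type*} (G : SimpleGraph V) (k : ℕ) : Prop :=
  ∃ (n : ℕ) (B : Fin n → Set V),
    (∀ v, ∃ i, v ∈ B i) ∧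
    (∀ a b, G.Adj a b → ∃ i, a ∈ B i ∧ b ∈ B i) ∧
    (∀ i j l : Fin n, i ≤ j → j ≤ l → ∀ v, v ∈ B i → v ∈ B l → v ∈ B j) ∧
    (∀ i, (B i).ncard ≤ k + 1)

/-- `w` is 2-reachable from `v` with respect to the order `r`. -/
def TwoReach {V : Type*} (G : SimpleGraph V) (r : V → V → Prop) (v w : V) : Prop :=
  w = v ∨ (r w v ∧ (G.Adj v w ∨ ∃ u, r v u ∧ u ≠ v ∧ G.Adj v u ∧ G.Adj u w))

/-- The 2-strong colouring number `col₂(G)`. -/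
noncomputable def col2 {V : Type*} (G : SimpleGraph V) : ℕ :=
  sInf {m | ∃ r : V → V → Prop, IsLinearOrder V r ∧ ∀ v, {w | TwoReach G r v w}.ncard ≤ m}

/-- `G` contains a complete bipartite subgraph `K_{s,t}`. -/
def HasKstSubgraph {V : Type*} (G : SimpleGraph V) (s t : ℕ) : Prop :=
  ∃ (A B : Finset V), Disjoint A B ∧ A.card = s ∧ B.card = t ∧
    ∀ a ∈ A, ∀ b ∈ B, G.Adj a b

/-- `x` is a prefix of `y`, as nodes of the complete `d`-ary tree of height `n`. -/
def SeqPrefix {n d : ℕ} (x y : Σ i : Fin n, Fin (i : ℕ) → Fin d) : Prop :=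
  ∃ h : (x.1 : ℕ) ≤ (y.1 : ℕ), ∀ a : Fin (x.1 : ℕ), y.2 (Fin.castLE h a) = x.2 a

/-- The graph `H^(d)`, on the nodes of the complete `d`-ary tree of height `n`:
on each root–leaf path `(x_1, …, x_n)`, `x_i x_j` is an edge iff `v_i v_j ∈ E(H)`. -/
def HdGraph (n d : ℕ) (H : SimpleGraph (Fin n)) :
    SimpleGraph (Σ i : Fin n, Fin (i : ℕ) → Fin d) where
  Adj x y := H.Adj x.1 y.1 ∧ (SeqPrefix x y ∨ SeqPrefix y x)
  symm := ⟨fun _ _ h => ⟨h.1.symm, h.2.symm⟩⟩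
  loopless := ⟨fun x h => H.loopless.irrefl x.1 h.1⟩

/-- Planarity, via Wagner's characterisation: no `K₅` minor and no `K_{3,3}` minor. -/
def IsPlanarWagner {V : Type*} (G : SimpleGraph V) : Prop :=
  ¬ IsMinorOf (⊤ : SimpleGraph (Fin 5)) G ∧
  ¬ IsMinorOf (completeBipartiteGraph (Fin 3) (Fin 3)) G

/-- The independence number. -/
noncomputable def indepNum {V : Type*} (H : SimpleGraph V) : ℕ :=
  sSup {m | ∃ s : Finset V, s.card = m ∧ ∀ a ∈ s, ∀ b ∈ s, a ≠ b → ¬ H.Adj a b}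

/-!
Fix an order attaining `col₂(G)` and give every vertex with an earlier neighbour its least
earlier neighbour as parent. These parent edges form a forest; colour each vertex by the
parity of its depth, so that a vertex and its parent always get different colours.
A neighbour of `v` of the same colour is either earlier than `v`, hence 2-reachable from `v`,
or later than `v`; in the latter case its parent is not `v`, lies before `v` and is 2-reachable
from `v` through it. Two later same-coloured neighbours of `v` with the same parent would span a
`K_{2,2}` together with `v` and that parent, so the parent map is injective on them. Each of
the two kinds of neighbours is thus at most as numerous as the 2-reachable set of `v`.
-/

noncomputable abbrev IsLinearOrder.toLinearOrder {V : Type*} (r : V → V → Prop)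
    [IsLinearOrder V r] : LinearOrder V where
  le := r
  le_refl := refl_of r
  le_trans _ _ _ := trans_of r
  le_antisymm _ _ := antisymm_of r
  le_total := total_of r
  toDecidableLE := Classical.decRel r

theorem exists_isLinearOrder_twoReach_ncard_le_col2 {V : Type*} [Finite V]
    (G : SimpleGraph V) :
    ∃ r : V → V → Prop, IsLinearOrder V r ∧ ∀ v, {w | TwoReach G r v w}.ncard ≤ col2 G := by
  let := IsWellOrder.linearOrder (WellOrderingRel (α := V))
  exact Nat.sInf_mem (s := {m | ∃ r : V → V → Prop, IsLinearOrder V r ∧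
    ∀ v, {w | TwoReach G r v w}.ncard ≤ m})
    ⟨Nat.card V, (· ≤ ·), inferInstance, fun _ => Set.ncard_le_card _⟩

theorem SimpleGraph.commonNeighbors_subsingleton {V : Type*} {G : SimpleGraph V}
    (hG : ¬ HasKstSubgraph G 2 2) {u₁ u₂ : V} (hu : u₁ ≠ u₂) :
    (G.commonNeighbors u₁ u₂).Subsingleton := by
  classical
  intro w₁ hw₁ w₂ hw₂
  by_contra hw
  rw [mem_commonNeighbors] at hw₁ hw₂
  refine hG ⟨{u₁, u₂}, {w₁, w₂}, ?_, Finset.card_pair hu, Finset.card_pair hw, ?_⟩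
  · simp only [Finset.disjoint_insert_left, Finset.disjoint_singleton_left, Finset.mem_insert,
      Finset.mem_singleton, not_or]
    exact ⟨⟨hw₁.1.ne, hw₂.1.ne⟩, hw₁.2.ne, hw₂.2.ne⟩
  · simp only [Finset.mem_insert, Finset.mem_singleton]
    rintro a (rfl | rfl) b (rfl | rfl) <;> tauto

namespace SimpleGraph

variable {V : Type*} [LinearOrder V] (G : SimpleGraph V)

def earlierNeighbors (v : V) : Set V := {w | G.Adj v w ∧ w < v}

section WellFounded

variable [WellFoundedLT V] {G}

variable (G) in
open Classical in
noncomputable def leastEarlierNeighbor (v : V) : V :=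
  if h : (G.earlierNeighbors v).Nonempty then wellFounded_lt.min _ h else v

theorem leastEarlierNeighbor_mem {v : V} (h : (G.earlierNeighbors v).Nonempty) :
    G.leastEarlierNeighbor v ∈ G.earlierNeighbors v := by
  rw [leastEarlierNeighbor, dif_pos h]
  exact wellFounded_lt.min_mem _ h

theorem leastEarlierNeighbor_le {v w : V} (hw : w ∈ G.earlierNeighbors v) :
    G.leastEarlierNeighbor v ≤ w := by
  rw [leastEarlierNeighbor, dif_pos ⟨w, hw⟩]
  exact not_lt.mp (wellFounded_lt.not_lt_min _ hw)

variable (G) in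
open Classical in
noncomputable def parityColoring : V → Fin 2 :=
  wellFounded_lt.fix fun v ih =>
    if h : (G.earlierNeighbors v).Nonempty then
      ih (G.leastEarlierNeighbor v) (leastEarlierNeighbor_mem h).2 + 1
    else 0

theorem parityColoring_leastEarlierNeighbor_ne {v : V} (h : (G.earlierNeighbors v).Nonempty) :
    G.parityColoring (G.leastEarlierNeighbor v) ≠ G.parityColoring v := by
  conv_rhs => rw [parityColoring, wellFounded_lt.fix_eq, dif_pos h]
  have hsucc : ∀ c : Fin 2, c ≠ c + 1 := by decide
  exact hsucc _

theorem leastEarlierNeighbor_lt {u v : V} (huv : G.Adj v u) (hvu : v < u)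
    (hc : G.parityColoring u = G.parityColoring v) : G.leastEarlierNeighbor u < v := by
  have hv : v ∈ G.earlierNeighbors u := ⟨huv.symm, hvu⟩
  refine (leastEarlierNeighbor_le hv).lt_of_ne fun heq => ?_
  exact parityColoring_leastEarlierNeighbor_ne ⟨v, hv⟩ (heq ▸ hc.symm)

theorem twoReach_leastEarlierNeighbor {u v : V} (huv : G.Adj v u) (hvu : v < u) :
    TwoReach G (· ≤ ·) v (G.leastEarlierNeighbor u) := by
  have hv : v ∈ G.earlierNeighbors u := ⟨huv.symm, hvu⟩
  exact Or.inr ⟨leastEarlierNeighbor_le hv, Or.inr ⟨u, hvu.le, hvu.ne', huv,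
    (leastEarlierNeighbor_mem ⟨v, hv⟩).1⟩⟩

theorem injOn_leastEarlierNeighbor (hG : ¬ HasKstSubgraph G 2 2) (v : V) :
    {u | G.Adj v u ∧ G.parityColoring u = G.parityColoring v ∧ v < u}.InjOn
      G.leastEarlierNeighbor := by
  rintro u₁ ⟨hadj₁, hc₁, hlt₁⟩ u₂ ⟨hadj₂, -, hlt₂⟩ heq
  by_contra hu
  have hp₁ := (leastEarlierNeighbor_mem ⟨v, hadj₁.symm, hlt₁⟩).1
  have hp₂ := (leastEarlierNeighbor_mem ⟨v, hadj₂.symm, hlt₂⟩).1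
  rw [← heq] at hp₂
  exact (leastEarlierNeighbor_lt hadj₁ hlt₁ hc₁).ne
    (commonNeighbors_subsingleton hG hu ⟨hp₁, hp₂⟩ ⟨hadj₁.symm, hadj₂.symm⟩)

end WellFounded

theorem hasDefect_parityColoring [Finite V] (hG : ¬ HasKstSubgraph G 2 2) {k : ℕ}
    (hk : ∀ v, {w | TwoReach G (· ≤ ·) v w}.ncard ≤ k) :
    HasDefect G G.parityColoring (2 * k) := by
  intro v
  set C := G.parityColoring
  set R := {w | TwoReach G (· ≤ ·) v w}
  have hearlier : {w | G.Adj v w ∧ C w = C v ∧ w < v}.ncard ≤ k :=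
    (Set.ncard_le_ncard (fun w hw => Or.inr ⟨hw.2.2.le, Or.inl hw.1⟩)).trans (hk v)
  have hlater : {w | G.Adj v w ∧ C w = C v ∧ v < w}.ncard ≤ k :=
    (Set.ncard_le_ncard_of_injOn (t := R) _
      (fun _ hu => twoReach_leastEarlierNeighbor hu.1 hu.2.2)
      (injOn_leastEarlierNeighbor hG v) (Set.toFinite R)).trans (hk v)
  have hsplit : {w | G.Adj v w ∧ C w = C v} ⊆
      {w | G.Adj v w ∧ C w = C v ∧ w < v} ∪ {w | G.Adj v w ∧ C w = C v ∧ v < w} := by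
    rintro w ⟨hadj, hc⟩
    exact hadj.ne'.lt_or_gt.imp (⟨hadj, hc, ·⟩) (⟨hadj, hc, ·⟩)
  calc {w | G.Adj v w ∧ C w = C v}.ncard
      ≤ _ := Set.ncard_le_ncard hsplit
    _ ≤ _ := Set.ncard_union_le _ _
    _ ≤ 2 * k := by omega

end SimpleGraph

/-- every `K_{2,2}`-subgraph-free graph is 2-colourable with defect at most
`2 * col₂(G)`. -/
theorem stmt7 {V : Type*} [Fintype V] (G : SimpleGraph V)
    (h : ¬ HasKstSubgraph G 2 2) :
    ∃ C : V → Fin 2, HasDefect G C (2 * col2 G) := by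
  obtain ⟨r, hr, hbound⟩ := exists_isLinearOrder_twoReach_ncard_le_col2 G
  let := IsLinearOrder.toLinearOrder r
  exact ⟨G.parityColoring, G.hasDefect_parityColoring h hbound⟩
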